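/- Let F = {{1,2,3},{1,4,5},{1,6,7},{2,4,7},{2,5,6},{3,4,6},{3,5,7}} and for each triple {i,j,k} ∈ F let S_{ijk} be the set of vectors in ℚ^7 whose coordinates at positions i, j, k are each ±2 and are 0 elsewhere; let S be the union of the seven sets S_{ijk}, and let H be the simple graph on S in which two distinct vectors are adjacent if and only if their squared Euclidean distance equals 16. Then the chromatic number of H equals 14. -/

import Mathlib

/-- The graph on a set `P` of points of `ℚⁿ` where two distinct points are
adjacent iff their squared Euclidean distance equals `s`. -/
def distSqGraph {n : ℕ} (P : Set (Fin n → ℚ)) (s : ℚ) : SimpleGraph P where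
  Adj x y := x ≠ y ∧ ∑ i, (x.1 i - y.1 i) ^ 2 = s
  symm := by
    constructor
    rintro x y ⟨hne, h⟩
    refine ⟨hne.symm, ?_⟩
    rw [← h]
    exact Finset.sum_congr rfl fun i _ => by ring
  loopless := by constructor; rintro x ⟨h, -⟩; exact h rfl

/-- The family `F = {{1,2,3},{1,4,5},{1,6,7},{2,4,7},{2,5,6},{3,4,6},{3,5,7}}`
of triples from `{1,…,7}`, written with `0`-based indices. -/
def fano : Finset (Finset (Fin 7)) :=
  {{0, 1, 2}, {0, 3, 4}, {0, 5, 6}, {1, 3, 6}, {1, 4, 5}, {2, 3, 5}, {2, 4, 6}}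

/-- `S`: vectors of `ℚ⁷` that are `±2` on some triple of `F` and `0` elsewhere. -/
def Sset : Set (Fin 7 → ℚ) :=
  {x | ∃ A ∈ fano, (∀ i ∈ A, x i = 2 ∨ x i = -2) ∧ ∀ i ∉ A, x i = 0}

/-- `T`: vectors of `ℚ⁷` that are `0` on some triple of `F` and `±1` elsewhere. -/
def Tset : Set (Fin 7 → ℚ) :=
  {x | ∃ A ∈ fano, (∀ i ∈ A, x i = 0) ∧ ∀ i ∉ A, x i = 1 ∨ x i = -1}

/-!
Every vector of `S` is carried by a line `A` of the Fano plane and is determined by its signs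
on `A`. Two vectors on the same line are adjacent iff they differ in exactly one sign; two
vectors on distinct lines, which meet in exactly one point `p`, are adjacent iff they agree at
`p`. Hence colouring a vector by its line and by the sign of the product of its entries is a
proper colouring with 14 colours.

Conversely, let `I` be independent. At a point shared by two occupied lines the vectors of one
line all carry the sign opposite to those of the other, so no three occupied lines are
concurrent; double counting then allows at most four occupied lines, and any two of them meet in
distinct points. The vectors of `I` on a line `A` agree at the points of `A` shared with other
occupied lines and pairwise differ in at least two coordinates, so by the Singleton bound there
are at most `2 ^ (2 - #shared points)` of them. Summing over the lines gives `#I ≤ 4`, and the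
56 vectors of `S` cannot be covered by 13 independent sets.
-/

open Finset

section Puncture

variable {ι β : Type*} [Fintype ι] [DecidableEq ι] [DecidableEq β]

-- The Singleton bound for minimum distance 2: forgetting the coordinate `r` is injective on `T`.
theorem card_le_prod_erase_of_two_le_hammingDist {S : ι → Finset β} {T : Finset (ι → β)}
    (hT : T ⊆ Fintype.piFinset S)
    (hd : (T : Set (ι → β)).Pairwise fun x y => 2 ≤ hammingDist x y) (r : ι) :
    #T ≤ ∏ i ∈ univ.erase r, #(S i) := by
  obtain hr | ⟨b, hb⟩ := (S r).eq_empty_or_nonempty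
  · have : T = ∅ := eq_empty_of_forall_notMem fun x hx => by
      simpa [hr] using Fintype.mem_piFinset.1 (hT hx) r
    simp [this]
  · calc #T ≤ #(Fintype.piFinset (Function.update S r {b})) := by
          refine card_le_card_of_injOn (Function.update · r b) (fun x hx => ?_)
            fun x hx y hy hxy => ?_
          · refine Fintype.mem_piFinset.2 fun i => ?_
            rcases eq_or_ne i r with rfl | hi
            · simp
            · simpa [hi] using Fintype.mem_piFinset.1 (hT hx) i
          · by_contra hne
            have hdiff : ({i | x i ≠ y i} : Finset ι) ⊆ {r} := fun i hi => by
              by_contra hir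
              have := congrFun hxy i
              simp_all
            exact absurd ((hd hx hy hne).trans (card_le_card hdiff)) (by simp)
      _ = ∏ i ∈ univ.erase r, #(S i) := by
          rw [Fintype.card_piFinset, ← mul_prod_erase univ _ (mem_univ r)]
          simp only [Function.update_self, card_singleton, one_mul]
          exact prod_congr rfl fun i hi => by rw [Function.update_of_ne (ne_of_mem_erase hi)]

end Puncture

lemma card_of_mem_fano : ∀ A ∈ fano, #A = 3 := by decide +kernel

lemma card_inter_of_mem_fano : ∀ A ∈ fano, ∀ B ∈ fano, A ≠ B → #(A ∩ B) = 1 := by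
  decide +kernel

lemma card_fano : #fano = 7 := by decide +kernel

def line (x : Fin 7 → ℚ) : Finset (Fin 7) := {i | x i ≠ 0}

section Line

variable {x y : Fin 7 → ℚ} {A : Finset (Fin 7)} {i p : Fin 7}

lemma line_eq_of_forall (h2 : ∀ i ∈ A, x i = 2 ∨ x i = -2) (h0 : ∀ i ∉ A, x i = 0) :
    line x = A := by
  ext i
  by_cases hi : i ∈ A
  · rcases h2 i hi with h | h <;> simp [line, hi, h]
  · simp [line, hi, h0 i hi]

lemma line_mem_fano (hx : x ∈ Sset) : line x ∈ fano := by
  obtain ⟨A, hA, h2, h0⟩ := hx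
  rwa [line_eq_of_forall h2 h0]

lemma eq_two_or_eq_neg_two (hx : x ∈ Sset) (hi : i ∈ line x) : x i = 2 ∨ x i = -2 := by
  obtain ⟨A, -, h2, h0⟩ := hx
  rw [line_eq_of_forall h2 h0] at hi
  exact h2 i hi

lemma eq_zero_of_notMem_line (hi : i ∉ line x) : x i = 0 := by
  simpa [line] using hi

lemma eq_neg_of_ne_of_pm_two {a b : ℚ} (ha : a = 2 ∨ a = -2) (hb : b = 2 ∨ b = -2) (h : a ≠ b) :
    b = -a := by
  rcases ha with rfl | rfl <;> rcases hb with rfl | rfl <;> first | exact absurd rfl h | norm_num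

lemma sum_sq_eq_twelve (hx : x ∈ Sset) : ∑ i, x i ^ 2 = 12 := by
  rw [← sum_subset (subset_univ (line x)) fun i _ hi => by simp [eq_zero_of_notMem_line hi],
    sum_congr rfl fun i hi => show x i ^ 2 = 4 by
      rcases eq_two_or_eq_neg_two hx hi with h | h <;> norm_num [h],
    sum_const, card_of_mem_fano _ (line_mem_fano hx)]
  norm_num

lemma sum_sq_sub_eq (hx : x ∈ Sset) (hy : y ∈ Sset) :
    ∑ i, (x i - y i) ^ 2 = 24 - 2 * ∑ i ∈ line x ∩ line y, x i * y i := by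
  have hxy : ∑ i ∈ line x ∩ line y, x i * y i = ∑ i, x i * y i :=
    sum_subset (subset_univ _) fun i _ hi => by
      rcases not_and_or.1 (mem_inter.not.1 hi) with h | h <;>
        simp [eq_zero_of_notMem_line h]
  rw [hxy, mul_sum]
  calc ∑ i, (x i - y i) ^ 2 = ∑ i, (x i ^ 2 + y i ^ 2 - 2 * (x i * y i)) :=
        sum_congr rfl fun i _ => by ring
    _ = 24 - ∑ i, 2 * (x i * y i) := by
        rw [sum_sub_distrib, sum_add_distrib, sum_sq_eq_twelve hx, sum_sq_eq_twelve hy]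
        norm_num

lemma sum_sq_sub_eq_sixteen_of_inter_eq (hx : x ∈ Sset) (hy : y ∈ Sset)
    (h : line x ∩ line y = {p}) (hp : x p = y p) : ∑ i, (x i - y i) ^ 2 = 16 := by
  have hpx : p ∈ line x := (mem_inter.1 (h ▸ mem_singleton_self p)).1
  rw [sum_sq_sub_eq hx hy, h, sum_singleton, ← hp]
  rcases eq_two_or_eq_neg_two hx hpx with h | h <;> norm_num [h]

lemma sum_sq_sub_eq_of_line_eq (hx : x ∈ Sset) (hy : y ∈ Sset) (h : line x = line y) :
    ∑ i, (x i - y i) ^ 2 = 16 * hammingDist x y := by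
  have hi : ∀ i, (x i - y i) ^ 2 = if x i ≠ y i then 16 else 0 := fun i => by
    by_cases hix : i ∈ line x
    · rcases eq_two_or_eq_neg_two hx hix with h1 | h1 <;>
        rcases eq_two_or_eq_neg_two hy (h ▸ hix) with h2 | h2 <;> norm_num [h1, h2]
    · have hiy : i ∉ line y := h ▸ hix
      simp [eq_zero_of_notMem_line hix, eq_zero_of_notMem_line hiy]
  simp only [hi, sum_ite, sum_const_zero, add_zero, sum_const, nsmul_eq_mul, hammingDist]
  ring

lemma inter_line_eq_singleton (hx : x ∈ Sset) (hy : y ∈ Sset) (hxy : line x ≠ line y)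
    (hpx : p ∈ line x) (hpy : p ∈ line y) : line x ∩ line y = {p} := by
  obtain ⟨q, hq⟩ := card_eq_one.1 <|
    card_inter_of_mem_fano _ (line_mem_fano hx) _ (line_mem_fano hy) hxy
  rw [hq, eq_comm, singleton_inj, ← mem_singleton, ← hq]
  exact mem_inter.2 ⟨hpx, hpy⟩

lemma apply_ne_of_line_ne (hx : x ∈ Sset) (hy : y ∈ Sset) (hxy : line x ≠ line y)
    (hpx : p ∈ line x) (hpy : p ∈ line y) (h : ∑ i, (x i - y i) ^ 2 ≠ 16) : x p ≠ y p :=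
  fun hp => h <| sum_sq_sub_eq_sixteen_of_inter_eq hx hy
    (inter_line_eq_singleton hx hy hxy hpx hpy) hp

lemma two_le_hammingDist (hx : x ∈ Sset) (hy : y ∈ Sset) (hxy : line x = line y) (hne : x ≠ y)
    (h : ∑ i, (x i - y i) ^ 2 ≠ 16) : 2 ≤ hammingDist x y := by
  have hpos := hammingDist_pos.2 hne
  have h1 : hammingDist x y ≠ 1 := fun h1 => h (by simp [sum_sq_sub_eq_of_line_eq hx hy hxy, h1])
  omega

end Line

section Coloring

variable {x y : Fin 7 → ℚ}

lemma prod_line_eq_neg (hx : x ∈ Sset) (hy : y ∈ Sset) (h : line x = line y)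
    (hd : hammingDist x y = 1) : ∏ i ∈ line y, y i = -∏ i ∈ line x, x i := by
  obtain ⟨p, hp⟩ := card_eq_one.1 hd
  have hdiff : ∀ i, x i ≠ y i ↔ i = p := fun i => by
    simpa using congrArg (i ∈ ·) hp
  have hpx : p ∈ line x := by
    by_contra hpx
    have hpy : p ∉ line y := h ▸ hpx
    exact (hdiff p).2 rfl (by simp [eq_zero_of_notMem_line hpx, eq_zero_of_notMem_line hpy])
  have hyp : y p = -x p := eq_neg_of_ne_of_pm_two (eq_two_or_eq_neg_two hx hpx)
    (eq_two_or_eq_neg_two hy (h ▸ hpx)) ((hdiff p).2 rfl)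
  rw [← h, ← mul_prod_erase _ _ hpx, ← mul_prod_erase _ _ hpx, hyp,
    prod_congr rfl fun i hi => not_not.1 fun hne => ne_of_mem_erase hi ((hdiff i).1 (Ne.symm hne))]
  ring

lemma prod_line_ne_zero : ∏ i ∈ line x, x i ≠ 0 :=
  prod_ne_zero_iff.2 fun i hi => by simpa [line] using hi

def fanoColoring : (distSqGraph Sset 16).Coloring ({A // A ∈ fano} × Bool) :=
  SimpleGraph.Coloring.mk
    (fun x => (⟨line x, line_mem_fano x.2⟩, decide (0 < ∏ i ∈ line x.1, x.1 i)))
    fun {x y} hadj heq => by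
      obtain ⟨-, hsum⟩ := hadj
      simp only [Prod.mk.injEq, Subtype.mk.injEq] at heq
      obtain ⟨hline, hsign⟩ := heq
      have hd : hammingDist x.1 y.1 = 1 := by
        rw [sum_sq_sub_eq_of_line_eq x.2 y.2 hline] at hsum
        exact_mod_cast (by linarith : (hammingDist x.1 y.1 : ℚ) = 1)
      rw [prod_line_eq_neg x.2 y.2 hline hd] at hsign
      have hiff := decide_eq_decide.1 hsign
      rcases (prod_line_ne_zero (x := x.1)).lt_or_gt with h | h
      · linarith [hiff.2 (neg_pos.2 h)]
      · linarith [hiff.1 h]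

lemma colorable_fourteen : (distSqGraph Sset 16).Colorable 14 := by
  simpa [card_fano] using fanoColoring.colorable

end Coloring

def sharedPoints (M : Finset (Finset (Fin 7))) (A : Finset (Fin 7)) : Finset (Fin 7) :=
  {p ∈ A | ∃ B ∈ M, B ≠ A ∧ p ∈ B}

section Fano

variable {M : Finset (Finset (Fin 7))}

lemma card_le_four_of_subset_fano (hM : M ⊆ fano) (hconc : ∀ p, #{A ∈ M | p ∈ A} ≤ 2) :
    #M ≤ 4 := by
  have := sum_card_inter_le (s := univ) (B := M) fun p _ => hconc p
  rw [sum_congr rfl fun A hA => by rw [univ_inter, card_of_mem_fano A (hM hA)], sum_const,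
    card_univ, Fintype.card_fin, smul_eq_mul] at this
  omega

lemma card_erase_le_card_sharedPoints (hM : M ⊆ fano) (hconc : ∀ p, #{A ∈ M | p ∈ A} ≤ 2)
    {A : Finset (Fin 7)} (hA : A ∈ M) : #(M.erase A) ≤ #(sharedPoints M A) := by
  refine card_le_card_of_forall_subsingleton (fun B p => p ∈ B) (fun B hB => ?_)
    fun p hp B hB C hC => ?_
  · obtain ⟨hBA, hB⟩ := mem_erase.1 hB
    obtain ⟨p, hp⟩ := card_pos.1 <|
      (card_inter_of_mem_fano A (hM hA) B (hM hB) hBA.symm).symm ▸ Nat.one_pos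
    obtain ⟨hpA, hpB⟩ := mem_inter.1 hp
    exact ⟨p, mem_filter.2 ⟨hpA, B, hB, hBA, hpB⟩, hpB⟩
  · by_contra hBC
    obtain ⟨hBA, hBM⟩ := mem_erase.1 hB.1
    obtain ⟨hCA, hCM⟩ := mem_erase.1 hC.1
    have hsub : {A, B, C} ⊆ {A ∈ M | p ∈ A} := by
      simp only [insert_subset_iff, singleton_subset_iff, mem_filter]
      exact ⟨⟨hA, (mem_filter.1 hp).1⟩, ⟨hBM, hB.2⟩, ⟨hCM, hC.2⟩⟩
    have := (card_le_card hsub).trans (hconc p)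
    rw [card_eq_three.2 ⟨A, B, C, hBA.symm, hCA.symm, hBC, rfl⟩] at this
    omega

lemma sum_two_pow_sharedPoints_le (hM : M ⊆ fano) (hconc : ∀ p, #{A ∈ M | p ∈ A} ≤ 2) :
    ∑ A ∈ M, 2 ^ (2 - #(sharedPoints M A)) ≤ 4 := by
  have hM4 := card_le_four_of_subset_fano hM hconc
  calc ∑ A ∈ M, 2 ^ (2 - #(sharedPoints M A)) ≤ ∑ _A ∈ M, 2 ^ (3 - #M) :=
        sum_le_sum fun A hA => by
          have := card_erase_le_card_sharedPoints hM hconc hA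
          rw [card_erase_of_mem hA] at this
          exact Nat.pow_le_pow_right two_pos (by omega)
    _ = #M * 2 ^ (3 - #M) := by rw [sum_const, smul_eq_mul]
    _ ≤ 4 := by interval_cases #M <;> norm_num

end Fano

section Independent

variable {I : Finset (Fin 7 → ℚ)}

lemma apply_eq_neg_of_line_ne (hS : ∀ x ∈ I, x ∈ Sset)
    (hI : (I : Set (Fin 7 → ℚ)).Pairwise fun x y => ∑ i, (x i - y i) ^ 2 ≠ 16)
    {x y : Fin 7 → ℚ} (hx : x ∈ I) (hy : y ∈ I) (hxy : line x ≠ line y) {p : Fin 7}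
    (hpx : p ∈ line x) (hpy : p ∈ line y) : y p = -x p :=
  eq_neg_of_ne_of_pm_two (eq_two_or_eq_neg_two (hS x hx) hpx) (eq_two_or_eq_neg_two (hS y hy) hpy) <|
    apply_ne_of_line_ne (hS x hx) (hS y hy) hxy hpx hpy (hI hx hy fun h => hxy (h ▸ rfl))

lemma card_filter_mem_image_line_le_two (hS : ∀ x ∈ I, x ∈ Sset)
    (hI : (I : Set (Fin 7 → ℚ)).Pairwise fun x y => ∑ i, (x i - y i) ^ 2 ≠ 16) (p : Fin 7) :
    #{A ∈ I.image line | p ∈ A} ≤ 2 := by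
  by_contra! h3
  obtain ⟨A, hA, B, hB, C, hC, hAB, hAC, hBC⟩ := two_lt_card.1 h3
  simp only [mem_filter, mem_image] at hA hB hC
  obtain ⟨⟨x, hx, rfl⟩, hpx⟩ := hA
  obtain ⟨⟨y, hy, rfl⟩, hpy⟩ := hB
  obtain ⟨⟨z, hz, rfl⟩, hpz⟩ := hC
  have hxy := apply_eq_neg_of_line_ne hS hI hx hy hAB hpx hpy
  have hxz := apply_eq_neg_of_line_ne hS hI hx hz hAC hpx hpz
  have hyz := apply_eq_neg_of_line_ne hS hI hy hz hBC hpy hpz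
  rcases eq_two_or_eq_neg_two (hS x hx) hpx with h | h <;> linarith

lemma card_filter_line_eq_le (hS : ∀ x ∈ I, x ∈ Sset)
    (hI : (I : Set (Fin 7 → ℚ)).Pairwise fun x y => ∑ i, (x i - y i) ^ 2 ≠ 16)
    {A : Finset (Fin 7)} (hA : A ∈ I.image line) :
    #{x ∈ I | line x = A} ≤ 2 ^ (2 - #(sharedPoints (I.image line) A)) := by
  set P := sharedPoints (I.image line) A
  obtain ⟨x₀, hx₀, rfl⟩ := mem_image.1 hA
  have hagree : ∀ x ∈ I, line x = line x₀ → ∀ p ∈ P, x p = x₀ p := by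
    intro x hx hline p hp
    obtain ⟨hp₀, B, hB, hBA, hpB⟩ := mem_filter.1 hp
    obtain ⟨z, hz, rfl⟩ := mem_image.1 hB
    have h₀ := apply_eq_neg_of_line_ne hS hI hx₀ hz hBA.symm hp₀ hpB
    have h := apply_eq_neg_of_line_ne hS hI hx hz (hline ▸ hBA.symm) (hline ▸ hp₀) hpB
    linarith
  set Q := line x₀ \ P
  set T := {x ∈ I | line x = line x₀}
  set S : Fin 7 → Finset ℚ := fun i => if i ∈ Q then {2, -2} else {x₀ i}
  have hT : T ⊆ Fintype.piFinset S := fun x hx => by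
    obtain ⟨hx, hline⟩ := mem_filter.1 hx
    refine Fintype.mem_piFinset.2 fun i => ?_
    by_cases hiQ : i ∈ Q
    · simpa [S, hiQ] using eq_two_or_eq_neg_two (hS x hx) (hline ▸ (mem_sdiff.1 hiQ).1)
    · simp only [S, hiQ, if_false, mem_singleton]
      by_cases hi : i ∈ line x₀
      · exact hagree x hx hline i (by simpa [Q, hi] using hiQ)
      · rw [eq_zero_of_notMem_line hi, eq_zero_of_notMem_line (show i ∉ line x by rwa [hline])]
  have hd : (T : Set (Fin 7 → ℚ)).Pairwise fun x y => 2 ≤ hammingDist x y :=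
    fun x hx y hy hne => by
      obtain ⟨hx, hlx⟩ := mem_filter.1 hx
      obtain ⟨hy, hly⟩ := mem_filter.1 hy
      exact two_le_hammingDist (hS x hx) (hS y hy) (hlx.trans hly.symm) hne (hI hx hy hne)
  obtain ⟨r, hr⟩ : ∃ r, #(Q.erase r) = #Q - 1 := by
    obtain hQ | ⟨r, hr⟩ := Q.eq_empty_or_nonempty
    · exact ⟨0, by simp [hQ]⟩
    · exact ⟨r, card_erase_of_mem hr⟩
  calc #T ≤ ∏ i ∈ univ.erase r, #(S i) := card_le_prod_erase_of_two_le_hammingDist hT hd r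
    _ = ∏ i ∈ univ.erase r, if i ∈ Q then 2 else 1 :=
        prod_congr rfl fun i _ => by
          split_ifs with h
          · simp only [S, if_pos h]
            exact card_pair (by norm_num)
          · simp only [S, if_neg h, card_singleton]
    _ = 2 ^ (2 - #P) := by
        rw [prod_ite_mem, prod_const, erase_inter, univ_inter, hr,
          card_sdiff_of_subset (show P ⊆ line x₀ from filter_subset _ _),
          card_of_mem_fano _ (line_mem_fano (hS x₀ hx₀))]
        congr 1
        omega

theorem card_le_four_of_pairwise (hS : ∀ x ∈ I, x ∈ Sset)
    (hI : (I : Set (Fin 7 → ℚ)).Pairwise fun x y => ∑ i, (x i - y i) ^ 2 ≠ 16) : #I ≤ 4 :=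
  calc #I = ∑ A ∈ I.image line, #{x ∈ I | line x = A} := card_eq_sum_card_image line I
    _ ≤ ∑ A ∈ I.image line, 2 ^ (2 - #(sharedPoints (I.image line) A)) :=
        sum_le_sum fun _ hA => card_filter_line_eq_le hS hI hA
    _ ≤ 4 := sum_two_pow_sharedPoints_le
        (image_subset_iff.2 fun x hx => line_mem_fano (hS x hx))
        (card_filter_mem_image_line_le_two hS hI)

end Independent

theorem SimpleGraph.Colorable.card_le_mul {V : Type*} {G : SimpleGraph V} {n a : ℕ}
    (hG : G.Colorable n) (h : ∀ t : Finset V, G.IsIndepSet (t : Set V) → #t ≤ a)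
    (s : Finset V) : #s ≤ n * a := by
  obtain ⟨C⟩ := hG
  calc #s = ∑ k : Fin n, #{v ∈ s | C v = k} := card_eq_sum_card_fiberwise fun v _ => mem_univ _
    _ ≤ ∑ _k : Fin n, a := sum_le_sum fun k _ => h _ fun v hv w hw _ hadj =>
        C.valid hadj ((mem_filter.1 hv).2.trans (mem_filter.1 hw).2.symm)
    _ = n * a := by simp

theorem card_le_four_of_isIndepSet {I : Finset Sset}
    (hI : (distSqGraph Sset 16).IsIndepSet (I : Set Sset)) : #I ≤ 4 := by
  rw [← card_map (Function.Embedding.subtype _)]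
  refine card_le_four_of_pairwise (fun x hx => ?_) fun x hx y hy hne hsum => ?_
  · obtain ⟨x, -, rfl⟩ := mem_map.1 hx
    exact x.2
  · obtain ⟨x, hx', rfl⟩ := mem_map.1 hx
    obtain ⟨y, hy', rfl⟩ := mem_map.1 hy
    have hne' : x ≠ y := fun h => hne (h ▸ rfl)
    exact hI hx' hy' hne' ⟨hne', hsum⟩

abbrev SignPattern : Type := Σ A : fano, (A.1 → Bool)

def signVector (v : SignPattern) : Fin 7 → ℚ :=
  fun i => if h : i ∈ v.1.1 then (if v.2 ⟨i, h⟩ then 2 else -2) else 0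

lemma signVector_forall_mem (v : SignPattern) :
    ∀ i ∈ v.1.1, signVector v i = 2 ∨ signVector v i = -2 := fun i hi => by
  by_cases hv : v.2 ⟨i, hi⟩ <;> simp [signVector, hi, hv]

lemma signVector_forall_notMem (v : SignPattern) :
    ∀ i ∉ v.1.1, signVector v i = 0 := fun i hi => by simp [signVector, hi]

lemma signVector_mem (v : SignPattern) : signVector v ∈ Sset :=
  ⟨v.1, v.1.2, signVector_forall_mem v, signVector_forall_notMem v⟩

lemma signVector_injective : Function.Injective signVector := by
  rintro ⟨A, s⟩ ⟨B, t⟩ h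
  obtain rfl : A = B := Subtype.ext <| by
    rw [← line_eq_of_forall (signVector_forall_mem ⟨A, s⟩) (signVector_forall_notMem ⟨A, s⟩),
      ← line_eq_of_forall (signVector_forall_mem ⟨B, t⟩) (signVector_forall_notMem ⟨B, t⟩), h]
  obtain rfl : s = t := funext fun j => by
    have := congrFun h j
    simp only [signVector, dif_pos j.2, Subtype.coe_eta] at this
    revert this
    cases s j <;> cases t j <;> norm_num
  rfl

lemma card_signPattern : Fintype.card (SignPattern) = 56 := by
  simp only [Fintype.card_sigma, Fintype.card_fun, Fintype.card_bool, Fintype.card_coe]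
  rw [sum_congr rfl fun A _ => by rw [card_of_mem_fano A.1 A.2]]
  simp [card_fano]

/-- The graph `H` on `S` (squared distance `16`) has chromatic number `14`. -/
theorem chromaticNumber_H_eq_fourteen :
    (distSqGraph Sset 16).chromaticNumber = 14 := by
  refine SimpleGraph.chromaticNumber_eq_iff_colorable_not_colorable (n := 13) |>.2
    ⟨colorable_fourteen, fun h13 => ?_⟩
  have := h13.card_le_mul (fun _ => card_le_four_of_isIndepSet)
    (univ.map ⟨fun v => ⟨signVector v, signVector_mem v⟩, fun v w h =>
      signVector_injective (congrArg Subtype.val h)⟩)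
  rw [card_map, card_univ, card_signPattern] at this
  omega
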